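/- arXiv:1602.00183 — 4 statements merged into one kernel-verified Lean document; each statement's English description precedes it below -/
import Mathlib

section
/- Let u : ℝ → ℝ be four times continuously differentiable in a neighborhood of 0 and let s ∈ ℝ with s ≠ 0 be fixed. Then there exist C > 0 and h₀ > 0 such that for every 0 < h < h₀ and every pair λ₁, λ₂ ∈ ℝ satisfying the MQ interpolation conditions λ₁ + λ₂·√(1 + s·h²) = u(0) and λ₁·√(1 + s·h²) + λ₂ = u(h), the interpolant I(x) = λ₁·√(1 + s·x²) + λ₂·√(1 + s·(x − h)²) satisfies |u(h/2) − I(h/2) − (1/8)·(s·u(h/2) − u''(h/2))·h²| ≤ C·h⁴. -/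
/-!
At the midpoint both basis functions take the value `√(1 + s h²/4)`, so the interpolant there
depends on `λ₁ + λ₂ = (u 0 + u h) / (1 + √(1 + s h²))` only:
`I (h/2) = W (s h²) · (u 0 + u h)` with `W t = √(1 + t/4) / (1 + √(1 + t))`, and
`W t = 1/2 - t/16 + O(t²)`.
Taylor expansion of `u` and `u''` at `0` gives `u 0 + u h = 2 u(h/2) + h²/4 · u''(h/2) + O(h⁴)`,
and substituting both expansions leaves the error `s h⁴ u''(h/2) / 64 + O(h⁴)`.
-/

open Set Filter Topology Asymptotics Nat

section Taylor

variable {E : Type*} [NormedAddCommGroup E] [NormedSpace ℝ E]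
  {f : ℝ → E} {x₀ : ℝ} {n : ℕ}

theorem ContDiffAt.isLittleO_sub_taylorWithinEval (hf : ContDiffAt ℝ n f x₀) :
    (fun x ↦ f x - taylorWithinEval f n univ x₀ x) =o[𝓝 x₀] fun x ↦ (x - x₀) ^ n := by
  obtain ⟨U, hU, hfU⟩ := hf.contDiffOn le_rfl (by simp)
  obtain ⟨ε, hε, hball⟩ := Metric.mem_nhds_iff.1 hU
  have hx₀ : x₀ ∈ Metric.ball x₀ ε := Metric.mem_ball_self hε
  have htaylor := taylor_isLittleO (convex_ball x₀ ε) hx₀ (hfU.mono hball)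
  rw [nhdsWithin_eq_nhds.2 (Metric.ball_mem_nhds x₀ hε)] at htaylor
  refine htaylor.congr_left fun x ↦ ?_
  simp only [taylor_within_apply, iteratedDerivWithin_univ,
    iteratedDerivWithin_of_isOpen Metric.isOpen_ball hx₀]

theorem ContDiffAt.isBigO_sub_taylorWithinEval (hf : ContDiffAt ℝ (n + 1) f x₀) :
    (fun x ↦ f x - taylorWithinEval f n univ x₀ x) =O[𝓝 x₀]
      fun x ↦ (x - x₀) ^ (n + 1) := by
  have hlast : (fun x ↦ (((n + 1 : ℝ) * n !)⁻¹ * (x - x₀) ^ (n + 1)) •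
      iteratedDerivWithin (n + 1) f univ x₀) =O[𝓝 x₀] fun x ↦ (x - x₀) ^ (n + 1) :=
    isBigO_of_le' _ fun x ↦ by rw [norm_smul, norm_mul, mul_right_comm]
  have hf' : ContDiffAt ℝ ↑(n + 1) f x₀ := by exact_mod_cast hf
  simpa only [taylorWithinEval_succ, sub_add_eq_sub_sub, sub_add_cancel] using
    hf'.isLittleO_sub_taylorWithinEval.isBigO.add hlast

end Taylor

section IteratedDeriv

variable {𝕜 F : Type*} [NontriviallyNormedField 𝕜] [NormedAddCommGroup F] [NormedSpace 𝕜 F]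

theorem ContDiffAt.iteratedDeriv {f : 𝕜 → F} {x : 𝕜} {n : WithTop ℕ∞} {m : ℕ}
    (hf : ContDiffAt 𝕜 (n + m) f x) : ContDiffAt 𝕜 n (iteratedDeriv m f) x := by
  induction m generalizing f with
  | zero => simpa using hf
  | succ m ih =>
    rw [iteratedDeriv_succ']
    exact ih (hf.derivWithin (by push_cast; rw [add_assoc]))

theorem iteratedDeriv_iteratedDeriv (f : 𝕜 → F) (k m : ℕ) :
    iteratedDeriv k (iteratedDeriv m f) = iteratedDeriv (k + m) f := by
  simp only [iteratedDeriv_eq_iterate, Function.iterate_add_apply]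

end IteratedDeriv

theorem Asymptotics.IsBigO.comp_div_const_pow {E : Type*} [NormedAddCommGroup E] {f : ℝ → E}
    {n : ℕ} (hf : f =O[𝓝 0] (· ^ n)) (c : ℝ) :
    (fun x ↦ f (x / c)) =O[𝓝 0] (· ^ n) := by
  have hc : Tendsto (· / c) (𝓝 (0 : ℝ)) (𝓝 0) := by
    simpa using (continuous_id.div_const c).tendsto 0
  refine (hf.comp_tendsto hc).trans ?_
  exact ((isBigO_refl (· ^ n) (𝓝 (0 : ℝ))).const_mul_left (c ^ n)⁻¹).congr_left
    fun x ↦ by simp [div_eq_inv_mul, mul_pow, inv_pow]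

theorem Asymptotics.IsBigO.exists_pos_bound_pow {f : ℝ → ℝ} {n : ℕ}
    (hf : f =O[𝓝 0] (· ^ n)) :
    ∃ C > 0, ∃ h₀ > 0, ∀ h : ℝ, 0 < h → h < h₀ → |f h| ≤ C * h ^ n := by
  obtain ⟨C, hC, hfC⟩ := hf.exists_pos
  obtain ⟨h₀, hh₀, hbound⟩ := Metric.eventually_nhds_iff.1 hfC.bound
  refine ⟨C, hC, h₀, hh₀, fun h hpos hlt ↦ ?_⟩
  have := hbound (by rwa [Real.dist_0_eq_abs, abs_of_pos hpos])
  rwa [Real.norm_eq_abs, norm_pow, Real.norm_of_nonneg hpos.le] at this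

theorem endpoints_sub_midpoint_isBigO {u : ℝ → ℝ} (hu : ContDiffAt ℝ 4 u 0) :
    (fun h ↦ u 0 + u h - (2 * u (h / 2) + h ^ 2 / 4 * iteratedDeriv 2 u (h / 2)))
      =O[𝓝 0] (· ^ 4) := by
  have hR : (fun x ↦ u x - (u 0 + x * deriv u 0 + 1 / 2 * x ^ 2 * iteratedDeriv 2 u 0 +
      1 / 6 * x ^ 3 * iteratedDeriv 3 u 0)) =O[𝓝 0] (· ^ 4) := by
    have h := hu.isBigO_sub_taylorWithinEval (n := 3)
    norm_num at h
    exact h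
  have hR₂ : (fun x ↦ iteratedDeriv 2 u x - (iteratedDeriv 2 u 0 + x * iteratedDeriv 3 u 0))
      =O[𝓝 0] (· ^ 2) := by
    simpa [iteratedDeriv_iteratedDeriv] using
      (hu.iteratedDeriv (n := 2) (m := 2)).isBigO_sub_taylorWithinEval (n := 1)
  have hcurv : (fun h ↦ 1 / 4 * (h ^ 2 * (iteratedDeriv 2 u (h / 2) -
      (iteratedDeriv 2 u 0 + h / 2 * iteratedDeriv 3 u 0)))) =O[𝓝 0] (· ^ 4) :=
    (((isBigO_refl (· ^ 2) (𝓝 (0 : ℝ))).mul (hR₂.comp_div_const_pow 2)).const_mul_left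
      (1 / 4)).congr_right fun h ↦ by ring
  refine ((hR.sub ((hR.comp_div_const_pow 2).const_mul_left 2)).sub hcurv).congr_left
    fun h ↦ ?_
  ring

noncomputable def mqMidpointWeight (t : ℝ) : ℝ := √(1 + t / 4) / (1 + √(1 + t))

theorem mq_interpolant_midpoint {s h l1 l2 a b : ℝ}
    (ha : l1 + l2 * √(1 + s * h ^ 2) = a) (hb : l1 * √(1 + s * h ^ 2) + l2 = b) :
    l1 * √(1 + s * (h / 2) ^ 2) + l2 * √(1 + s * (h / 2 - h) ^ 2) =
      mqMidpointWeight (s * h ^ 2) * (a + b) := by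
  have hsum : a + b = (l1 + l2) * (1 + √(1 + s * h ^ 2)) := by linear_combination -ha - hb
  have hpos : 1 + √(1 + s * h ^ 2) ≠ 0 := by positivity
  calc l1 * √(1 + s * (h / 2) ^ 2) + l2 * √(1 + s * (h / 2 - h) ^ 2)
      = (l1 + l2) * √(1 + s * h ^ 2 / 4) := by ring_nf
    _ = mqMidpointWeight (s * h ^ 2) * (a + b) := by
      rw [mqMidpointWeight, hsum]; field_simp

theorem hasDerivAt_mqMidpointWeight_zero : HasDerivAt mqMidpointWeight (-1 / 16) 0 := by
  have hnum : HasDerivAt (fun t : ℝ ↦ √(1 + t / 4)) (1 / 8) 0 :=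
    ((((hasDerivAt_id' 0).div_const 4).const_add 1).sqrt (by norm_num)).congr_deriv (by norm_num)
  have hden : HasDerivAt (fun t : ℝ ↦ 1 + √(1 + t)) (1 / 2) 0 :=
    ((((hasDerivAt_id' 0).const_add 1).sqrt (by norm_num)).const_add 1).congr_deriv (by norm_num)
  exact (hnum.div hden (by norm_num)).congr_deriv (by norm_num)

theorem contDiffAt_mqMidpointWeight_zero {n : WithTop ℕ∞} :
    ContDiffAt ℝ n mqMidpointWeight 0 := by
  have hsqrt (c : ℝ) : ContDiffAt ℝ n (fun t : ℝ ↦ √(1 + t / c)) 0 :=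
    (Real.contDiffAt_sqrt (by norm_num)).comp 0 (by fun_prop)
  have hden : ContDiffAt ℝ n (fun t : ℝ ↦ 1 + √(1 + t)) 0 := by
    simpa using contDiffAt_const.add (hsqrt 1)
  exact (hsqrt 4).div hden (by norm_num)

theorem mqMidpointWeight_sub_isBigO :
    (fun t ↦ mqMidpointWeight t - (1 / 2 - t / 16)) =O[𝓝 0] (· ^ 2) := by
  have h0 : mqMidpointWeight 0 = 1 / 2 := by norm_num [mqMidpointWeight]
  refine (contDiffAt_mqMidpointWeight_zero.isBigO_sub_taylorWithinEval (n := 1)).congr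
    (fun t ↦ ?_) (fun t ↦ by simp)
  norm_num [h0, hasDerivAt_mqMidpointWeight_zero.deriv]
  ring

theorem mq_midpoint_error_isBigO {u : ℝ → ℝ} (hu : ContDiffAt ℝ 4 u 0) (s : ℝ) :
    (fun h ↦ u (h / 2) - mqMidpointWeight (s * h ^ 2) * (u 0 + u h)
        - 1 / 8 * (s * u (h / 2) - iteratedDeriv 2 u (h / 2)) * h ^ 2) =O[𝓝 0] (· ^ 4) := by
  have hhalf : Tendsto (· / 2) (𝓝 (0 : ℝ)) (𝓝 0) := by
    simpa using (continuous_id.div_const (2 : ℝ)).tendsto 0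
  have hsq : Tendsto (fun h : ℝ ↦ s * h ^ 2) (𝓝 0) (𝓝 0) := by
    simpa using (Continuous.tendsto (by fun_prop : Continuous fun h : ℝ ↦ s * h ^ 2) 0)
  have hcurv_bdd : (fun h ↦ iteratedDeriv 2 u (h / 2)) =O[𝓝 0] (fun _ ↦ (1 : ℝ)) :=
    ((hu.iteratedDeriv (n := 2) (m := 2)).continuousAt.tendsto.comp hhalf).isBigO_one ℝ
  have hsum_bdd : (fun h ↦ u 0 + u h) =O[𝓝 0] (fun _ ↦ (1 : ℝ)) :=
    (tendsto_const_nhds.add hu.continuousAt.tendsto).isBigO_one ℝ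
  have hweight_bdd : (fun h : ℝ ↦ 1 / 2 - s * h ^ 2 / 16) =O[𝓝 0] (fun _ ↦ (1 : ℝ)) :=
    (Continuous.tendsto (by fun_prop) 0).isBigO_one ℝ
  have hweight : (fun h ↦ mqMidpointWeight (s * h ^ 2) - (1 / 2 - s * h ^ 2 / 16))
      =O[𝓝 0] (· ^ 4) :=
    (mqMidpointWeight_sub_isBigO.comp_tendsto hsq).trans <|
      ((isBigO_refl (· ^ 4) _).const_mul_left (s ^ 2)).congr_left fun h ↦ by
        rw [Function.comp_apply]; ring
  -- With `D` the defect of `endpoints_sub_midpoint_isBigO` and `W = mqMidpointWeight`, the error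
  -- is `s h⁴ u''(h/2) / 64 - (1/2 - s h²/16) D h - (W (s h²) - (1/2 - s h²/16)) (u 0 + u h)`.
  have hmain := ((((isBigO_refl (· ^ 4) _).mul hcurv_bdd).const_mul_left (s / 64)).sub
    ((endpoints_sub_midpoint_isBigO hu).mul hweight_bdd)).sub (hweight.mul hsum_bdd)
  simp only [mul_one] at hmain
  exact hmain.congr_left fun h ↦ by ring

theorem stmt_0_general (u : ℝ → ℝ) (s : ℝ) (hu : ContDiffAt ℝ 4 u 0) :
    ∃ C > 0, ∃ h₀ > 0, ∀ h : ℝ, 0 < h → h < h₀ →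
      ∀ l1 l2 : ℝ,
        l1 + l2 * Real.sqrt (1 + s * h ^ 2) = u 0 →
        l1 * Real.sqrt (1 + s * h ^ 2) + l2 = u h →
        |u (h / 2)
            - (l1 * Real.sqrt (1 + s * (h / 2) ^ 2)
              + l2 * Real.sqrt (1 + s * (h / 2 - h) ^ 2))
            - (1 / 8) * (s * u (h / 2) - iteratedDeriv 2 u (h / 2)) * h ^ 2|
          ≤ C * h ^ 4 := by
  obtain ⟨C, hC, h₀, hh₀, hbound⟩ := (mq_midpoint_error_isBigO hu s).exists_pos_bound_pow
  refine ⟨C, hC, h₀, hh₀, fun h hpos hlt l1 l2 h0 h1 ↦ ?_⟩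
  rw [mq_interpolant_midpoint h0 h1]
  exact hbound h hpos hlt

/-- Two-point MQ-RBF interpolation: Taylor expansion of the midpoint error
around the midpoint `h/2`. -/
theorem stmt_0 (u : ℝ → ℝ) (s : ℝ) (hs : s ≠ 0) (hu : ContDiffAt ℝ 4 u 0) :
    ∃ C > 0, ∃ h₀ > 0, ∀ h : ℝ, 0 < h → h < h₀ →
      ∀ l1 l2 : ℝ,
        l1 + l2 * Real.sqrt (1 + s * h ^ 2) = u 0 →
        l1 * Real.sqrt (1 + s * h ^ 2) + l2 = u h →
        |u (h / 2)
            - (l1 * Real.sqrt (1 + s * (h / 2) ^ 2)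
              + l2 * Real.sqrt (1 + s * (h / 2 - h) ^ 2))
            - (1 / 8) * (s * u (h / 2) - iteratedDeriv 2 u (h / 2)) * h ^ 2|
          ≤ C * h ^ 4 :=
  stmt_0_general u s hu
end

section
/- Let u : ℝ → ℝ be four times continuously differentiable in a neighborhood of 0 and let s ∈ ℝ with s ≠ 0 be fixed. Then there exist C > 0 and h₀ > 0 such that for every 0 < h < h₀ and every pair λ₁, λ₂ ∈ ℝ satisfying the MQ interpolation conditions λ₁ + λ₂·√(1 + s·h²) = u(0) and λ₁·√(1 + s·h²) + λ₂ = u(h), the interpolant I(x) = λ₁·√(1 + s·x²) + λ₂·√(1 + s·(x − h)²) satisfies |u(h/2) − I(h/2) − (1/8)·(s·u(0) − u''(0))·h² − (1/16)·(s·u'(0) − u'''(0))·h³| ≤ C·h⁴. -/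
open Set

private lemma sqrt_quad_est' (x : ℝ) (hx : |x| ≤ 1/2) :
    |Real.sqrt (1+x) - (1 + x/2)| ≤ x^2 := by
  obtain ⟨hl, hr⟩ := abs_le.mp hx
  have h1 : (0:ℝ) ≤ 1 + x := by linarith
  have hy := Real.sq_sqrt h1
  have hy0 := Real.sqrt_nonneg (1+x)
  set y := Real.sqrt (1+x) with hydef
  rw [abs_le]
  constructor <;>
    nlinarith [sq_nonneg (y - 1), sq_nonneg (y + 1 + x/2), sq_nonneg x, sq_nonneg (y-1-x/2)]

private lemma taylor3_bound' (u : ℝ → ℝ) (hu : ContDiffAt ℝ 4 u 0) :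
    ∃ δ > 0, ∃ M ≥ (0:ℝ), ∀ x ∈ Icc (0:ℝ) δ,
      |u x - (u 0 + deriv u 0 * x + iteratedDeriv 2 u 0 * x^2/2
          + iteratedDeriv 3 u 0 * x^3/6)| ≤ M * x^4 := by
  obtain ⟨V, hV, hCD⟩ := hu.contDiffOn le_rfl (by simp)
  obtain ⟨ε, hε, hball⟩ := Metric.mem_nhds_iff.mp hV
  refine ⟨ε/2, by positivity, ?_⟩
  set δ := ε/2 with hδdef
  have hδ : 0 < δ := by positivity
  have hIcc_ball : Icc (0:ℝ) δ ⊆ Metric.ball 0 ε := by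
    intro x hx
    simp only [Metric.mem_ball, Real.dist_eq, sub_zero]
    rw [abs_lt]
    refine ⟨by linarith [hx.1], ?_⟩
    have := hx.2; simp only [hδdef] at this; linarith
  have hCDb : ContDiffOn ℝ 4 u (Metric.ball 0 ε) := hCD.mono hball
  have hCDI : ContDiffOn ℝ 4 u (Icc 0 δ) := hCDb.mono hIcc_ball
  have hud : UniqueDiffOn ℝ (Icc (0:ℝ) δ) := uniqueDiffOn_Icc hδ
  have hT : HasFTaylorSeriesUpToOn 4 u (ftaylorSeriesWithin ℝ u (Metric.ball 0 ε))
      (Metric.ball 0 ε) := hCDb.ftaylorSeriesWithin Metric.isOpen_ball.uniqueDiffOn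
  have hT' := hT.mono hIcc_ball
  have hder : ∀ k : ℕ, k ≤ 4 → iteratedDerivWithin k u (Icc 0 δ) 0 = iteratedDeriv k u 0 := by
    intro k hk
    have h0b : (0:ℝ) ∈ Metric.ball (0:ℝ) ε := Metric.mem_ball_self hε
    have h0I : (0:ℝ) ∈ Icc (0:ℝ) δ := Set.left_mem_Icc.mpr hδ.le
    have e1 := hT'.eq_iteratedFDerivWithin_of_uniqueDiffOn (m := k) (by exact_mod_cast hk) hud h0I
    have e3 := iteratedFDerivWithin_of_isOpen (𝕜 := ℝ) (f := u) k Metric.isOpen_ball h0b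
    have e4 : iteratedFDerivWithin ℝ k u (Icc 0 δ) 0 = iteratedFDeriv ℝ k u 0 := by
      rw [← e1]; exact e3
    rw [iteratedDerivWithin_eq_iteratedFDerivWithin, iteratedDeriv_eq_iteratedFDeriv, e4]
  obtain ⟨C0, hC0⟩ := exists_taylor_mean_remainder_bound (n := 3) hδ.le (by exact_mod_cast hCDI)
  refine ⟨max C0 0, le_max_right _ _, ?_⟩
  intro x hx
  have hTeq : taylorWithinEval u 3 (Icc 0 δ) 0 x
      = u 0 + deriv u 0 * x + iteratedDeriv 2 u 0 * x^2/2 + iteratedDeriv 3 u 0 * x^3/6 := by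
    rw [taylor_within_apply]
    rw [Finset.sum_range_succ, Finset.sum_range_succ, Finset.sum_range_succ,
      Finset.sum_range_one]
    rw [hder 0 (by norm_num), hder 1 (by norm_num), hder 2 (by norm_num), hder 3 (by norm_num)]
    simp [iteratedDeriv_zero, iteratedDeriv_one, Nat.factorial, smul_eq_mul]
    ring
  have h1 := hC0 x hx
  rw [hTeq] at h1
  have h2 : |u x - (u 0 + deriv u 0 * x + iteratedDeriv 2 u 0 * x^2/2
      + iteratedDeriv 3 u 0 * x^3/6)| ≤ C0 * x^4 := by
    simpa [Real.norm_eq_abs] using h1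
  refine h2.trans ?_
  exact mul_le_mul_of_nonneg_right (le_max_left _ _) (by positivity)

set_option maxHeartbeats 1000000 in
private lemma g_bounds' (s h p q : ℝ)
    (hsh : |s*h^2| ≤ 1/2)
    (hq0 : 0 ≤ q)
    (hqe : |q - (1 + (s*h^2)/2)| ≤ (s*h^2)^2)
    (hpe : |p - (1 + (s*h^2)/8)| ≤ ((s*h^2)/4)^2) :
    |p/(1+q) - (1/2 - s*h^2/16)| ≤ s^2*h^4 ∧ |p/(1+q)| ≤ 1 := by
  obtain ⟨hs1, hs2⟩ := abs_le.mp hsh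
  obtain ⟨hq1, hq2⟩ := abs_le.mp hqe
  obtain ⟨hp1, hp2⟩ := abs_le.mp hpe
  have hsq : (s*h^2)^2 ≤ 1/4 := by nlinarith
  have hD : (3:ℝ)/2 ≤ 1 + q := by nlinarith
  have hDpos : (0:ℝ) < 1 + q := by linarith
  constructor
  · have hprod : |(s*h^2) * (q - (1 + (s*h^2)/2))| ≤ (1/2) * (s*h^2)^2 := by
      rw [abs_mul]
      exact mul_le_mul hsh hqe (abs_nonneg _) (by norm_num)
    obtain ⟨hpr1, hpr2⟩ := abs_le.mp hprod
    have hnum : |p - (1/2 - s*h^2/16)*(1+q)| ≤ (3/2) * (s^2*h^4) := by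
      have hid : p - (1/2 - s*h^2/16)*(1+q)
          = (p - (1 + (s*h^2)/8)) - (q - (1 + (s*h^2)/2))/2 + (s*h^2)^2/32
            + ((s*h^2) * (q - (1 + (s*h^2)/2)))/16 := by ring
      rw [hid, abs_le]
      have he : (s*h^2)^2 = s^2*h^4 := by ring
      constructor <;> nlinarith [sq_nonneg (s*h^2)]
    have hre : p/(1+q) - (1/2 - s*h^2/16) = (p - (1/2 - s*h^2/16)*(1+q))/(1+q) := by
      field_simp
    rw [hre, abs_div, abs_of_pos hDpos, div_le_iff₀ hDpos]
    have hsnn : (0:ℝ) ≤ s^2*h^4 := by positivity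
    have hmul := mul_le_mul_of_nonneg_left hD hsnn
    calc |p - (1/2 - s*h^2/16)*(1+q)| ≤ (3/2) * (s^2*h^4) := hnum
      _ ≤ s^2*h^4*(1+q) := by linarith
  · have hsq2 : (s*h^2/4)^2 ≤ 1/64 := by
      have : (s*h^2/4)^2 = (s*h^2)^2/16 := by ring
      linarith
    rw [abs_div, abs_of_pos hDpos, div_le_one hDpos, abs_le]
    constructor <;> linarith

set_option maxHeartbeats 1000000 in
private lemma assemble' (s h g u0 uh uh2 a1 a2 a3 M : ℝ)
    (hh0 : 0 < h) (hh1 : h ≤ 1) (hM : 0 ≤ M)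
    (hr : |uh - (u0 + a1*h + a2*h^2/2 + a3*h^3/6)| ≤ M*h^4)
    (hr1 : |uh2 - (u0 + a1*(h/2) + a2*(h/2)^2/2 + a3*(h/2)^3/6)| ≤ M*(h/2)^4)
    (hg : |g| ≤ 1)
    (hrho : |g - (1/2 - s*h^2/16)| ≤ s^2*h^4) :
    |uh2 - (u0+uh)*g - 1/8*(s*u0 - a2)*h^2 - 1/16*(s*a1 - a3)*h^3|
      ≤ (|s| * |a2|/32 + |s| * |a3|/96 + 2*M + (2*|u0| + |a1| + |a2| + |a3|)*s^2 + 1)*h^4 := by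
  have h4pos : (0:ℝ) < h^4 := by positivity
  set P := s*a2*h^4/32 + s*a3*h^5/96 with hPdef
  set B := u0 + (u0 + a1*h + a2*h^2/2 + a3*h^3/6) with hBdef
  set r := uh - (u0 + a1*h + a2*h^2/2 + a3*h^3/6) with hrdef
  set r1 := uh2 - (u0 + a1*(h/2) + a2*(h/2)^2/2 + a3*(h/2)^3/6) with hr1def
  set rho := g - (1/2 - s*h^2/16) with hrhodef
  have key : uh2 - (u0+uh)*g - 1/8*(s*u0 - a2)*h^2 - 1/16*(s*a1 - a3)*h^3
      = P + r1 - r*g - B*rho := by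
    rw [hPdef, hBdef, hrdef, hr1def, hrhodef]; ring
  have hs2 : h^5 ≤ h^4 := by nlinarith
  have hP : |P| ≤ (|s| * |a2|/32 + |s| * |a3|/96)*h^4 := by
    have e1 : |s*a2*h^4/32| = |s| * |a2| * h^4/32 := by
      rw [abs_div, abs_mul, abs_mul, abs_pow, abs_of_pos hh0]; norm_num
    have e2 : |s*a3*h^5/96| = |s| * |a3| * h^5/96 := by
      rw [abs_div, abs_mul, abs_mul, abs_pow, abs_of_pos hh0]; norm_num
    have e3 : |s| * |a3| * h^5 ≤ |s| * |a3| * h^4 :=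
      mul_le_mul_of_nonneg_left hs2 (mul_nonneg (abs_nonneg _) (abs_nonneg _))
    calc |P| ≤ |s*a2*h^4/32| + |s*a3*h^5/96| := abs_add_le _ _
      _ = |s| * |a2| * h^4/32 + |s| * |a3| * h^5/96 := by rw [e1, e2]
      _ ≤ |s| * |a2| * h^4/32 + |s| * |a3| * h^4/96 := by linarith
      _ = (|s| * |a2|/32 + |s| * |a3|/96)*h^4 := by ring
  have hh2 : h^2 ≤ 1 := by nlinarith
  have hh3 : h^3 ≤ 1 := by nlinarith
  have c1 : |a1*h| ≤ |a1| := by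
    rw [abs_mul, abs_of_pos hh0]
    exact mul_le_of_le_one_right (abs_nonneg _) hh1
  have c2 : |a2*h^2/2| ≤ |a2| := by
    rw [abs_div, abs_mul, abs_pow, abs_of_pos hh0]
    have : |a2| * h^2 ≤ |a2| := mul_le_of_le_one_right (abs_nonneg _) hh2
    have h2 : (0:ℝ) ≤ |a2| * h^2 := by positivity
    norm_num; linarith
  have c3 : |a3*h^3/6| ≤ |a3| := by
    rw [abs_div, abs_mul, abs_pow, abs_of_pos hh0]
    have : |a3| * h^3 ≤ |a3| := mul_le_of_le_one_right (abs_nonneg _) hh3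
    have h2 : (0:ℝ) ≤ |a3| * h^3 := by positivity
    norm_num; linarith
  have hB : |B| ≤ 2*|u0| + |a1| + |a2| + |a3| := by
    rw [hBdef, abs_le]
    obtain ⟨d1, d1'⟩ := abs_le.mp c1
    obtain ⟨d2, d2'⟩ := abs_le.mp c2
    obtain ⟨d3, d3'⟩ := abs_le.mp c3
    constructor <;> linarith [le_abs_self u0, neg_abs_le u0]
  have hr1' : |r1| ≤ M*h^4 := by
    refine hr1.trans ?_
    nlinarith [pow_nonneg hh0.le 4]
  have hrg : |r*g| ≤ M*h^4 := by
    rw [abs_mul]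
    calc |r| * |g| ≤ (M*h^4)*1 :=
          mul_le_mul hr hg (abs_nonneg _) (by positivity)
      _ = M*h^4 := by ring
  have hBrho : |B*rho| ≤ (2*|u0| + |a1| + |a2| + |a3|)*s^2*h^4 := by
    rw [abs_mul]
    calc |B| * |rho| ≤ (2*|u0| + |a1| + |a2| + |a3|)*(s^2*h^4) :=
          mul_le_mul hB hrho (abs_nonneg _) (by positivity)
      _ = (2*|u0| + |a1| + |a2| + |a3|)*s^2*h^4 := by ring
  rw [key]
  have t1 : |P + r1 - r*g - B*rho| ≤ |P + r1 - r*g| + |B*rho| := abs_sub _ _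
  have t2 : |P + r1 - r*g| ≤ |P + r1| + |r*g| := abs_sub _ _
  have t3 : |P + r1| ≤ |P| + |r1| := abs_add_le _ _
  have expand : (|s| * |a2|/32 + |s| * |a3|/96 + 2*M + (2*|u0| + |a1| + |a2| + |a3|)*s^2 + 1)*h^4
      = (|s| * |a2|/32 + |s| * |a3|/96)*h^4 + M*h^4 + M*h^4
        + (2*|u0| + |a1| + |a2| + |a3|)*s^2*h^4 + h^4 := by ring
  rw [expand]
  linarith

/-- Two-point MQ-RBF interpolation: Taylor expansion of the midpoint error
around the left node `0`. -/
theorem stmt_1 (u : ℝ → ℝ) (s : ℝ) (hs : s ≠ 0) (hu : ContDiffAt ℝ 4 u 0) :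
    ∃ C > 0, ∃ h₀ > 0, ∀ h : ℝ, 0 < h → h < h₀ →
      ∀ l1 l2 : ℝ,
        l1 + l2 * Real.sqrt (1 + s * h ^ 2) = u 0 →
        l1 * Real.sqrt (1 + s * h ^ 2) + l2 = u h →
        |u (h / 2)
            - (l1 * Real.sqrt (1 + s * (h / 2) ^ 2)
              + l2 * Real.sqrt (1 + s * (h / 2 - h) ^ 2))
            - (1 / 8) * (s * u 0 - iteratedDeriv 2 u 0) * h ^ 2
            - (1 / 16) * (s * deriv u 0 - iteratedDeriv 3 u 0) * h ^ 3|
          ≤ C * h ^ 4 := by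
  obtain ⟨δ, hδ, M, hM, hTay⟩ := taylor3_bound' u hu
  refine ⟨|s| * |iteratedDeriv 2 u 0|/32 + |s| * |iteratedDeriv 3 u 0|/96 + 2*M
      + (2*|u 0| + |deriv u 0| + |iteratedDeriv 2 u 0| + |iteratedDeriv 3 u 0|)*s^2 + 1, ?_,
    min δ (min 1 (1/(2*(1+|s|)))), ?_, ?_⟩
  · have e1 : (0:ℝ) ≤ |s| * |iteratedDeriv 2 u 0|/32 := by positivity
    have e2 : (0:ℝ) ≤ |s| * |iteratedDeriv 3 u 0|/96 := by positivity
    have e3 : (0:ℝ) ≤ (2*|u 0| + |deriv u 0| + |iteratedDeriv 2 u 0| + |iteratedDeriv 3 u 0|)*s^2 := by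
      positivity
    linarith
  · positivity
  intro h hh0 hhm l1 l2 hc1 hc2
  have hhδ : h ≤ δ := le_of_lt (lt_of_lt_of_le hhm (min_le_left _ _))
  have hh1 : h ≤ 1 := le_of_lt (lt_of_lt_of_le hhm ((min_le_right _ _).trans (min_le_left _ _)))
  have hsl : h < 1/(2*(1+|s|)) := lt_of_lt_of_le hhm ((min_le_right _ _).trans (min_le_right _ _))
  have h2pos : (0:ℝ) < 2*(1+|s|) := by positivity
  have hlt : h*(2*(1+|s|)) < 1 := (lt_div_iff₀ h2pos).mp hsl
  have hsh : |s*h^2| ≤ 1/2 := by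
    have habs : |s*h^2| = |s| * h^2 := by
      rw [abs_mul, abs_pow, abs_of_pos hh0]
    rw [habs]
    nlinarith [abs_nonneg s, mul_nonneg (abs_nonneg s) (sq_nonneg h)]
  -- sqrt estimates
  have hqe : |Real.sqrt (1 + s*h^2) - (1 + (s*h^2)/2)| ≤ (s*h^2)^2 := by
    have := sqrt_quad_est' (s*h^2) hsh
    convert this using 3 <;> ring
  have hsh4 : |s*h^2/4| ≤ 1/2 := by
    rw [abs_div]
    have : |(4:ℝ)| = 4 := by norm_num
    rw [this]
    linarith [abs_nonneg (s*h^2), abs_le.mp hsh]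
  have hpe : |Real.sqrt (1 + s*(h/2)^2) - (1 + (s*h^2)/8)| ≤ ((s*h^2)/4)^2 := by
    have h1 := sqrt_quad_est' (s*h^2/4) hsh4
    have e1 : (1 + s*h^2/4 : ℝ) = 1 + s*(h/2)^2 := by ring
    have e2 : (1 + (s*h^2/4)/2 : ℝ) = 1 + (s*h^2)/8 := by ring
    rw [e1, e2] at h1
    exact h1
  have hq0 : (0:ℝ) ≤ Real.sqrt (1 + s*h^2) := Real.sqrt_nonneg _
  obtain ⟨hrho, hgb⟩ := g_bounds' s h (Real.sqrt (1 + s*(h/2)^2)) (Real.sqrt (1 + s*h^2))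
    hsh hq0 hqe hpe
  -- interpolation identity
  have hq1 : (0:ℝ) < 1 + Real.sqrt (1 + s*h^2) := by positivity
  have hsum : (l1 + l2)*(1 + Real.sqrt (1 + s*h^2)) = u 0 + u h := by
    have e : Real.sqrt (1 + s*h^2) = Real.sqrt (1 + s*h^2) := rfl
    linear_combination hc1 + hc2
  have hinterp : l1 * Real.sqrt (1 + s*(h/2)^2) + l2 * Real.sqrt (1 + s*(h/2)^2)
      = (u 0 + u h) * (Real.sqrt (1 + s*(h/2)^2) / (1 + Real.sqrt (1 + s*h^2))) := by
    rw [mul_div_assoc', eq_div_iff hq1.ne']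
    linear_combination Real.sqrt (1 + s*(h/2)^2) * hsum
  have erw : (1 + s*(h/2 - h)^2 : ℝ) = 1 + s*(h/2)^2 := by ring
  rw [erw, hinterp]
  -- Taylor bounds at h and h/2
  have hin : h ∈ Icc (0:ℝ) δ := ⟨hh0.le, hhδ⟩
  have hin2 : h/2 ∈ Icc (0:ℝ) δ := ⟨by linarith, by linarith⟩
  have hr := hTay h hin
  have hr1 := hTay (h/2) hin2
  have final := assemble' s h (Real.sqrt (1 + s*(h/2)^2) / (1 + Real.sqrt (1 + s*h^2)))
    (u 0) (u h) (u (h/2)) (deriv u 0) (iteratedDeriv 2 u 0) (iteratedDeriv 3 u 0) M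
    hh0 hh1 hM hr hr1 hgb hrho
  convert final using 2
end

section
/- Let Δx > 0, s > 0 and set η = s·Δx². Let the centers be x₀ = 0, x₁ = Δx, x₂ = 2Δx and let a, b ∈ ℝ. If λ₁, λ₂, λ₃ ∈ ℝ satisfy the three interpolation conditions P(x₀) = −Δx·a, P(x₁) = 0, P(x₂) = Δx·b, where P(x) = λ₁·√(1 + s·(x − x₀)²) + λ₂·√(1 + s·(x − x₁)²) + λ₃·√(1 + s·(x − x₂)²), then the derivative of P at x₁ is P'(x₁) = ((√(4η + 1) + 1)/(4·√(η + 1)))·(a + b). -/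
/-!
Subtracting the interpolation conditions at the two outer nodes, the middle basis function
drops out and the outer ones are swapped, so `(λ₁ - λ₃)(√(4η + 1) - 1) = Δx (a + b)`.
At the middle node the derivative of the middle basis function vanishes and the outer ones
contribute `± sΔx / √(η + 1)`, so `P'(Δx) = (λ₁ - λ₃) sΔx / √(η + 1)`. Eliminating
`λ₁ - λ₃` and rationalising `η / (√(4η + 1) - 1) = (√(4η + 1) + 1) / 4` gives the claim.
-/

open Real

lemma hasDerivAt_sqrt_one_add_mul_sq {s : ℝ} (hs : 0 ≤ s) (c x : ℝ) :
    HasDerivAt (fun y => √(1 + s * (y - c) ^ 2)) (s * (x - c) / √(1 + s * (x - c) ^ 2)) x := by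
  have hpos : 0 < 1 + s * (x - c) ^ 2 := by positivity
  have hinner : HasDerivAt (fun y => 1 + s * (y - c) ^ 2) (s * (2 * (x - c))) x := by
    simpa using (((hasDerivAt_id x).sub_const c).pow 2).const_mul s |>.const_add 1
  refine (hinner.sqrt hpos.ne').congr_deriv ?_
  field_simp

lemma one_lt_sqrt_four_mul_add_one {η : ℝ} (hη : 0 < η) : 1 < √(4 * η + 1) :=
  (lt_sqrt zero_le_one).2 (by linarith)

lemma div_sqrt_four_mul_add_one_sub_one {η : ℝ} (hη : 0 < η) :
    η / (√(4 * η + 1) - 1) = (√(4 * η + 1) + 1) / 4 := by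
  have hsq : √(4 * η + 1) ^ 2 = 4 * η + 1 := sq_sqrt (by linarith)
  rw [div_eq_div_iff (by linarith [one_lt_sqrt_four_mul_add_one hη]) four_ne_zero]
  linear_combination -hsq

noncomputable def mqInterp (s Δx l1 l2 l3 : ℝ) (x : ℝ) : ℝ :=
  l1 * √(1 + s * (x - 0) ^ 2) + l2 * √(1 + s * (x - Δx) ^ 2) + l3 * √(1 + s * (x - 2 * Δx) ^ 2)

section mqInterp

variable (Δx l1 l2 l3 : ℝ)

lemma mqInterp_two_mul_sub_mqInterp_zero (s : ℝ) :
    mqInterp s Δx l1 l2 l3 (2 * Δx) - mqInterp s Δx l1 l2 l3 0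
      = (l1 - l3) * (√(4 * (s * Δx ^ 2) + 1) - 1) := by
  rw [mqInterp, mqInterp, show 1 + s * (2 * Δx - 0) ^ 2 = 4 * (s * Δx ^ 2) + 1 by ring,
    show 1 + s * (0 - 2 * Δx) ^ 2 = 4 * (s * Δx ^ 2) + 1 by ring,
    show 2 * Δx - Δx = -(0 - Δx) by ring]
  simp only [neg_sq, sub_self, ne_eq, OfNat.ofNat_ne_zero, not_false_eq_true,
    zero_pow, mul_zero, add_zero, sqrt_one]
  ring

lemma hasDerivAt_mqInterp_middle {s : ℝ} (hs : 0 ≤ s) :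
    HasDerivAt (mqInterp s Δx l1 l2 l3) ((l1 - l3) * (s * Δx) / √(s * Δx ^ 2 + 1)) Δx := by
  have hφ (c : ℝ) := hasDerivAt_sqrt_one_add_mul_sq hs c Δx
  refine (((hφ 0).const_mul l1).add ((hφ Δx).const_mul l2) |>.add
    ((hφ (2 * Δx)).const_mul l3)).congr_deriv ?_
  rw [show 1 + s * (Δx - 0) ^ 2 = s * Δx ^ 2 + 1 by ring,
    show 1 + s * (Δx - 2 * Δx) ^ 2 = s * Δx ^ 2 + 1 by ring]
  ring

end mqInterp

theorem stmt_4_general (Δx s : ℝ) (hΔ : 0 < Δx) (hs : 0 < s) (a b l1 l2 l3 : ℝ)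
    (P : ℝ → ℝ)
    (hP : P = fun x => l1 * Real.sqrt (1 + s * (x - 0) ^ 2)
        + l2 * Real.sqrt (1 + s * (x - Δx) ^ 2)
        + l3 * Real.sqrt (1 + s * (x - 2 * Δx) ^ 2))
    (h0 : P 0 = -Δx * a) (h2 : P (2 * Δx) = Δx * b) :
    deriv P Δx
      = ((Real.sqrt (4 * (s * Δx ^ 2) + 1) + 1) / (4 * Real.sqrt (s * Δx ^ 2 + 1)))
        * (a + b) := by
  replace hP : P = mqInterp s Δx l1 l2 l3 := hP
  subst hP
  have hη : 0 < s * Δx ^ 2 := by positivity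
  have hgap : √(4 * (s * Δx ^ 2) + 1) - 1 ≠ 0 :=
    sub_ne_zero.2 (one_lt_sqrt_four_mul_add_one hη).ne'
  have hweights : l1 - l3 = Δx * (a + b) / (√(4 * (s * Δx ^ 2) + 1) - 1) := by
    rw [eq_div_iff hgap, ← mqInterp_two_mul_sub_mqInterp_zero, h0, h2]
    ring
  rw [(hasDerivAt_mqInterp_middle Δx l1 l2 l3 hs.le).deriv, hweights]
  calc Δx * (a + b) / (√(4 * (s * Δx ^ 2) + 1) - 1) * (s * Δx) / √(s * Δx ^ 2 + 1)
      = s * Δx ^ 2 / (√(4 * (s * Δx ^ 2) + 1) - 1) / (4 * √(s * Δx ^ 2 + 1)) * 4 * (a + b) := by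
        ring
    _ = _ := by
        rw [div_sqrt_four_mul_add_one_sub_one hη]
        ring

/-- The derivative at the middle node of the three-point MQ interpolant of the
primitive values `(−Δx·a, 0, Δx·b)` equals the exact k = 2 coefficient times `a + b`. -/
theorem stmt_4 (Δx s : ℝ) (hΔ : 0 < Δx) (hs : 0 < s) (a b l1 l2 l3 : ℝ)
    (P : ℝ → ℝ)
    (hP : P = fun x => l1 * Real.sqrt (1 + s * (x - 0) ^ 2)
        + l2 * Real.sqrt (1 + s * (x - Δx) ^ 2)
        + l3 * Real.sqrt (1 + s * (x - 2 * Δx) ^ 2))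
    (h0 : P 0 = -Δx * a) (h1 : P Δx = 0) (h2 : P (2 * Δx) = Δx * b) :
    deriv P Δx
      = ((Real.sqrt (4 * (s * Δx ^ 2) + 1) + 1) / (4 * Real.sqrt (s * Δx ^ 2 + 1)))
        * (a + b) :=
  stmt_4_general Δx s hΔ hs a b l1 l2 l3 P hP h0 h2
end

section
/- Let h : ℝ → ℝ be three times continuously differentiable in a neighborhood of x ∈ ℝ with h(x) ≠ 0, and set s = −(1/3)·h''(x)/h(x) and η = s·Δx². Then the adaptive one-sided k = 2 MQ-RBF reconstruction is third-order accurate: there exist C, Δx₀ > 0 such that |(−1/2 + η/2)·h̄₋ + (3/2 − (3/2)·η)·h̄₀ − h(x)| ≤ C·Δx³ for all 0 < Δx < Δx₀, whereas the polynomial coefficients (η = 0) give only second-order accuracy in general. -/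
/-!
The cell averages are difference quotients of the primitive `F y = ∫ t in x..y, h t`, which is
`C⁴` near `x` with Taylor coefficients `h x, h' x, h'' x`. Expanding `F (x - d)` and `F (x - 2d)`
to third order with an `O(d⁴)` remainder, the polynomial weights reproduce `h x` up to the error
`-(1/3) h''(x) d²`, and the `η`-terms cancel it exactly: what remains is `-(h''²/(9h)) d⁴` plus the
Taylor remainders divided by `d`, all `O(d³)`.
-/

open Set Filter Topology Asymptotics intervalIntegral

section

variable {E : Type*} [NormedAddCommGroup E] [NormedSpace ℝ E]

theorem taylor_isBigO {f : ℝ → E} {x₀ : ℝ} {n : ℕ} {s : Set ℝ}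
    (hs : Convex ℝ s) (hx₀s : x₀ ∈ s) (hf : ContDiffOn ℝ (n + 1) f s) :
    (fun x ↦ f x - taylorWithinEval f n s x₀ x) =O[𝓝[s] x₀] fun x ↦ (x - x₀) ^ (n + 1) := by
  set v := iteratedDerivWithin (n + 1) f s x₀
  have hnext : (fun x ↦ (((n + 1 : ℝ) * n.factorial)⁻¹ * (x - x₀) ^ (n + 1)) • v)
      =O[𝓝[s] x₀] fun x ↦ (x - x₀) ^ (n + 1) :=
    .of_bound (‖((n + 1 : ℝ) * n.factorial)⁻¹‖ * ‖v‖) <| .of_forall fun x ↦ by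
      rw [norm_smul, norm_mul]; exact le_of_eq (by ring)
  refine ((taylor_isLittleO hs hx₀s (by exact_mod_cast hf)).isBigO.add hnext).congr_left
    fun x ↦ ?_
  rw [taylorWithinEval_succ]
  abel

variable {f : ℝ → E} {s : Set ℝ}

theorem intervalIntegral.integral_eq_sub_of_continuousOn (hs : s.OrdConnected)
    (hf : ContinuousOn f s) {a b c : ℝ} (ha : a ∈ s) (hb : b ∈ s) (hc : c ∈ s) :
    ∫ t in b..c, f t = (∫ t in a..c, f t) - ∫ t in a..b, f t :=
  (integral_interval_sub_left (hf.mono (hs.uIcc_subset ha hc)).intervalIntegrable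
    (hf.mono (hs.uIcc_subset ha hb)).intervalIntegrable).symm

variable [CompleteSpace E]

theorem hasDerivAt_integral_of_continuousOn (hs : IsOpen s) (hs' : s.OrdConnected)
    (hf : ContinuousOn f s) {a b : ℝ} (ha : a ∈ s) (hb : b ∈ s) :
    HasDerivAt (fun y ↦ ∫ t in a..y, f t) (f b) b :=
  integral_hasDerivAt_right (hf.mono (hs'.uIcc_subset ha hb)).intervalIntegrable
    (hf.stronglyMeasurableAtFilter hs b hb) (hf.continuousAt (hs.mem_nhds hb))

theorem ContDiffOn.integral_right {n : ℕ} (hf : ContDiffOn ℝ n f s) (hs : IsOpen s)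
    (hs' : s.OrdConnected) {a : ℝ} (ha : a ∈ s) :
    ContDiffOn ℝ (n + 1) (fun y ↦ ∫ t in a..y, f t) s := by
  have hderiv : ∀ b ∈ s, HasDerivAt (fun y ↦ ∫ t in a..y, f t) (f b) b := fun b hb ↦
    hasDerivAt_integral_of_continuousOn hs hs' hf.continuousOn ha hb
  rw [contDiffOn_succ_iff_deriv_of_isOpen hs]
  exact ⟨fun b hb ↦ (hderiv b hb).differentiableAt.differentiableWithinAt, by simp,
    hf.congr fun b hb ↦ (hderiv b hb).deriv⟩

theorem iteratedDerivWithin_succ_integral_right (k : ℕ) (hf : ContinuousOn f s) (hs : IsOpen s)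
    (hs' : s.OrdConnected) {a x : ℝ} (ha : a ∈ s) (hx : x ∈ s) :
    iteratedDerivWithin (k + 1) (fun y ↦ ∫ t in a..y, f t) s x = iteratedDeriv k f x := by
  rw [iteratedDerivWithin_succ', ← iteratedDerivWithin_of_isOpen hs hx]
  refine iteratedDerivWithin_congr (fun b hb ↦ ?_) hx
  exact (hasDerivAt_integral_of_continuousOn hs hs' hf ha hb).hasDerivWithinAt.derivWithin
    (hs.uniqueDiffWithinAt hb)

theorem ContDiffOn.isBigO_integral_sub_taylor {x : ℝ} {n : ℕ} (hf : ContDiffOn ℝ (n + 1) f s)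
    (hs : IsOpen s) (hs' : Convex ℝ s) (hx : x ∈ s) :
    (fun y ↦ (∫ t in x..y, f t) - ∑ k ∈ Finset.range (n + 1),
        (((k + 1).factorial : ℝ)⁻¹ * (y - x) ^ (k + 1)) • iteratedDeriv k f x)
      =O[𝓝 x] fun y ↦ (y - x) ^ (n + 2) := by
  have hF := taylor_isBigO hs' hx (n := n + 1)
    (by exact_mod_cast hf.integral_right hs hs'.ordConnected hx)
  rw [nhdsWithin_eq_nhds.2 (hs.mem_nhds hx)] at hF
  refine hF.congr_left fun y ↦ ?_
  rw [taylor_within_apply, Finset.sum_range_succ']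
  simp [iteratedDerivWithin_succ_integral_right _ hf.continuousOn hs hs'.ordConnected hx hx]

end

lemma isBigO_div_self_of_isBigO_pow_succ {f : ℝ → ℝ} {l : Filter ℝ} {n : ℕ}
    (hf : f =O[l] fun d ↦ d ^ (n + 1)) : (fun d ↦ f d / d) =O[l] fun d ↦ d ^ n := by
  refine (hf.mul (isBigO_refl (·⁻¹) l)).trans (.of_bound 1 (.of_forall fun d ↦ ?_)) |>.congr_left
    fun d ↦ (div_eq_mul_inv _ _).symm
  rcases eq_or_ne d 0 with rfl | hd
  · simp
  · rw [pow_succ, mul_inv_cancel_right₀ hd, one_mul]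

lemma Asymptotics.IsBigO.comp_sub_mul_div {ρ : ℝ → ℝ} {x : ℝ} {n : ℕ}
    (hρ : ρ =O[𝓝 x] fun y ↦ (y - x) ^ (n + 1)) (c : ℝ) :
    (fun d ↦ ρ (x - c * d) / d) =O[𝓝 0] fun d ↦ d ^ n := by
  have hlim : Tendsto (fun d : ℝ ↦ x - c * d) (𝓝 0) (𝓝 x) :=
    (by fun_prop : Continuous fun d : ℝ ↦ x - c * d).tendsto' 0 x (by simp)
  refine isBigO_div_self_of_isBigO_pow_succ ((hρ.comp_tendsto hlim).trans ?_)
  exact (isBigO_const_mul_self ((-c) ^ (n + 1)) _ _).congr_left fun d ↦ by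
    simp only [Function.comp_apply]; ring

lemma isBigO_reconstruction_error {F : ℝ → ℝ} {x h₀ h₁ h₂ : ℝ} (hh₀ : h₀ ≠ 0)
    (hF : (fun y ↦ F y - (h₀ * (y - x) + h₁ * (y - x) ^ 2 / 2 + h₂ * (y - x) ^ 3 / 6))
      =O[𝓝 x] fun y ↦ (y - x) ^ 4) :
    (fun d ↦ (-(1 / 2) + (-(1 / 3) * h₂ / h₀) * d ^ 2 / 2)
          * ((1 / d) * (F (x - d) - F (x - 2 * d)))
        + (3 / 2 - (3 / 2) * ((-(1 / 3) * h₂ / h₀) * d ^ 2)) * ((1 / d) * (F x - F (x - d)))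
        - h₀) =O[𝓝[>] 0] fun d ↦ d ^ 3 := by
  set ρ := fun y ↦ F y - (h₀ * (y - x) + h₁ * (y - x) ^ 2 / 2 + h₂ * (y - x) ^ 3 / 6) with hρ
  set s := -(1 / 3) * h₂ / h₀ with hs
  have hFx : F x = 0 := by
    have hF' : ρ =O[𝓝 x] fun y ↦ ‖y - x‖ ^ 4 := hF.norm_right.congr_right fun y ↦ by simp
    simpa [hρ] using hF'.eq_zero_of_norm_pow (by norm_num)
  have h1 := (hF.comp_sub_mul_div 1).mono (nhdsWithin_le_nhds (s := Ioi 0))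
  have h2 := (hF.comp_sub_mul_div 2).mono (nhdsWithin_le_nhds (s := Ioi 0))
  have ha : (fun d : ℝ ↦ -(1 / 2) + s * d ^ 2 / 2) =O[𝓝[>] 0] fun _ ↦ (1 : ℝ) :=
    ((Continuous.tendsto (by fun_prop) 0).mono_left nhdsWithin_le_nhds).isBigO_one ℝ
  have hb : (fun d : ℝ ↦ 3 / 2 - (3 / 2) * (s * d ^ 2)) =O[𝓝[>] 0] fun _ ↦ (1 : ℝ) :=
    ((Continuous.tendsto (by fun_prop) 0).mono_left nhdsWithin_le_nhds).isBigO_one ℝ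
  have hmain : (fun d : ℝ ↦ -(h₂ ^ 2 / (9 * h₀)) * d ^ 4) =O[𝓝[>] 0] fun d ↦ d ^ 3 :=
    ((isLittleO_pow_pow (by norm_num : 3 < 4)).isBigO.const_mul_left _).mono nhdsWithin_le_nhds
  have hrem := ((ha.mul (h1.sub h2)).sub (hb.mul h1)).congr_right fun d ↦ one_mul (d ^ 3)
  refine (hmain.add hrem).congr' ?_ (by simp)
  filter_upwards [self_mem_nhdsWithin] with d (hd : 0 < d)
  simp only [hρ, hs, hFx, one_mul]
  field_simp
  ring

lemma exists_pos_bound_of_isBigO_nhdsGT {f : ℝ → ℝ} {n : ℕ}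
    (hf : f =O[𝓝[>] 0] fun d ↦ d ^ n) :
    ∃ C > 0, ∃ d₀ > 0, ∀ d : ℝ, 0 < d → d < d₀ → |f d| ≤ C * d ^ n := by
  obtain ⟨C, hC, hCf⟩ := hf.exists_pos
  obtain ⟨d₀, hd₀, hbound⟩ := (nhdsGT_basis 0).eventually_iff.1 hCf.bound
  refine ⟨C, hC, d₀, hd₀, fun d hd hdd ↦ ?_⟩
  simpa [abs_of_pos hd] using hbound ⟨hd, hdd⟩

/-- With the adaptive shape parameter `s = −(1/3)h''(x)/h(x)` the one-sided
(r = 1) k = 2 MQ-RBF reconstruction is third-order accurate. -/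
theorem stmt_18 (h : ℝ → ℝ) (x : ℝ) (hh : ContDiffAt ℝ 3 h x) (hx : h x ≠ 0) :
    ∃ C > 0, ∃ d₀ > 0, ∀ d : ℝ, 0 < d → d < d₀ →
      |(-(1 / 2) + (-(1 / 3) * iteratedDeriv 2 h x / h x) * d ^ 2 / 2)
            * ((1 / d) * ∫ ξ in (x - 2 * d)..(x - d), h ξ)
          + (3 / 2 - (3 / 2) * ((-(1 / 3) * iteratedDeriv 2 h x / h x) * d ^ 2))
            * ((1 / d) * ∫ ξ in (x - d)..x, h ξ)
          - h x|
        ≤ C * d ^ 3 := by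
  obtain ⟨u, hu, hcd⟩ := hh.contDiffOn le_rfl (by simp)
  obtain ⟨δ, hδ, hball⟩ := Metric.mem_nhds_iff.1 hu
  have hxB : x ∈ Metric.ball x δ := Metric.mem_ball_self hδ
  have hcdB : ContDiffOn ℝ (2 + 1) h (Metric.ball x δ) := hcd.mono hball
  have hE := isBigO_reconstruction_error (h₁ := iteratedDeriv 1 h x)
    (h₂ := iteratedDeriv 2 h x) hx
    ((hcdB.isBigO_integral_sub_taylor Metric.isOpen_ball (convex_ball x δ) hxB).congr_left
      fun y ↦ by simp [Finset.sum_range_succ, Nat.factorial]; ring)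
  refine exists_pos_bound_of_isBigO_nhdsGT (hE.congr' ?_ EventuallyEq.rfl)
  have hnear (c : ℝ) : ∀ᶠ d in 𝓝[>] (0 : ℝ), x - c * d ∈ Metric.ball x δ :=
    nhdsWithin_le_nhds <| ((by fun_prop : Continuous fun d : ℝ ↦ x - c * d).tendsto' 0 x
      (by simp)).eventually (Metric.ball_mem_nhds x hδ)
  filter_upwards [hnear 1, hnear 2] with d h1 h2
  rw [one_mul] at h1
  have hcont := hcdB.continuousOn
  rw [integral_eq_sub_of_continuousOn (convex_ball x δ).ordConnected hcont hxB h2 h1,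
    integral_eq_sub_of_continuousOn (convex_ball x δ).ordConnected hcont hxB h1 hxB]
end
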